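/- arXiv:2603.09008 — 3 statements merged into one kernel-verified Lean document; each statement's English description precedes it below -/
import Mathlib

section
/- Let n ≥ 1 and r ≥ 1 be integers. Let I^r_n be the number of inversions of the random permutation of [n] obtained by performing r iterated random-to-top shuffles starting from the identity. Let R_1, ..., R_n be independent random variables with R_i uniform on {0, 1, ..., n−i}, and let K^r_n be the number of distinct values among r i.i.d. uniform samples from [n], independent of (R_1,...,R_n). Then I^r_n is equal in distribution to Σ_{i=1}^{K^r_n} R_i. -/
/-!
Read the deck after the shuffles as a list: the distinct selected cards come first, most recently
selected on top, followed by the unselected cards in increasing order. The unselected part carries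
no inversions, so the inversion count is the sum of the first `K` entries of the Lehmer code, and
the entry at position `i` depends only on the cards in positions `≤ i`. Relabelling the cards by a
permutation `σ` (replacing the selections `s` by `σ ∘ s`) preserves `K` and composes the top `K`
cards with `σ`, so given `K = k` the top `k` cards agree equally often with every permutation.
Since the Lehmer code is a bijection from permutations onto `∏ i, Fin (n - i)`, the first `k` code
entries of the deck are then independent and uniform, which is the claim.
-/

open MeasureTheory ProbabilityTheory Filter Finset Topology
open scoped NNReal

/-- Move card `c` to the top (position `0`) of the deck `π`
(where `π i` is the card in position `i`). -/
def moveToTop {n : ℕ} (c : Fin n) (π : Equiv.Perm (Fin n)) : Equiv.Perm (Fin n) :=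
  π * ((π⁻¹ c).cycleRange)⁻¹

/-- The permutation (position `i` ↦ card in position `i`) obtained after performing
iterated random-to-top moves with selected cards `s 0, s 1, …`, starting from the
identity deck `(1, 2, …, n)`. -/
def rttPerm (n r : ℕ) (s : Fin r → Fin n) : Equiv.Perm (Fin n) :=
  (List.ofFn s).foldl (fun π c => moveToTop c π) 1

/-- Number of fixed points of a permutation. -/
def fixedPointCount {n : ℕ} (π : Equiv.Perm (Fin n)) : ℕ :=
  (Finset.univ.filter fun i => π i = i).card

/-- Number of descents of a permutation. -/
def descentCount {n : ℕ} (π : Equiv.Perm (Fin n)) : ℕ :=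
  (Finset.univ.filter fun p : Fin n × Fin n =>
    (p.1 : ℕ) + 1 = (p.2 : ℕ) ∧ π p.2 < π p.1).card

/-- Number of inversions of a permutation. -/
def inversionCount {n : ℕ} (π : Equiv.Perm (Fin n)) : ℕ :=
  (Finset.univ.filter fun p : Fin n × Fin n => p.1 < p.2 ∧ π p.2 < π p.1).card

/-- The number of distinct values among `s 0, …, s (r-1)` (the occupancy count `K^r_n`). -/
def distinctCount (n r : ℕ) (s : Fin r → Fin n) : ℕ :=
  (Finset.univ.image s).card

/-- Probability of the event `p` under the uniform distribution on the finite type `α`. -/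
noncomputable def unifProb {α : Type*} [Fintype α] (p : α → Prop) : ℝ :=
  (Nat.card {x : α // p x} : ℝ) / (Fintype.card α : ℝ)

/-- Expectation of `f` under the uniform distribution on the finite type `α`. -/
noncomputable def unifExpect {α : Type*} [Fintype α] (f : α → ℝ) : ℝ :=
  (∑ x, f x) / (Fintype.card α : ℝ)

/-- Variance of `f` under the uniform distribution on the finite type `α`. -/
noncomputable def unifVar {α : Type*} [Fintype α] (f : α → ℝ) : ℝ :=
  unifExpect fun x => (f x - unifExpect f) ^ 2

/-- `max_{1 ≤ i ≤ k} π(i)`: the maximum card value (in `{1, …, n}`, i.e. `val + 1`)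
among the first `k` positions of `π`. -/
def maxFirst (n k : ℕ) (π : Equiv.Perm (Fin n)) : ℕ :=
  (Finset.univ.filter fun i : Fin n => (i : ℕ) < k).sup fun i => (π i : ℕ) + 1

/-- The number of fixed points among the first `k` positions of `π`. -/
def fixedFirst (n k : ℕ) (π : Equiv.Perm (Fin n)) : ℕ :=
  (Finset.univ.filter fun i : Fin n => (i : ℕ) < k ∧ π i = i).card

open List in
lemma List.dedup_append_singleton {α : Type*} [DecidableEq α] (l : List α) (c : α) :
    (l ++ [c]).dedup = l.dedup.erase c ++ [c] := by
  induction l with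
  | nil => simp
  | cons a t ih =>
    by_cases hat : a ∈ t
    · rw [cons_append, dedup_cons_of_mem (mem_append_left _ hat), ih, dedup_cons_of_mem hat]
    by_cases hac : a = c
    · subst hac
      rw [cons_append, dedup_cons_of_mem (by simp), ih, dedup_cons_of_notMem hat, erase_cons_head,
        erase_of_not_mem (mt mem_dedup.1 hat)]
    · rw [cons_append, dedup_cons_of_notMem (by simp [hat, hac]), ih, dedup_cons_of_notMem hat,
        erase_cons_tail (by simpa using hac), cons_append]

open List in
lemma List.ofFn_comp_succAbove {α : Type*} {n : ℕ} (f : Fin (n + 1) → α) (j : Fin (n + 1)) :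
    ofFn (f ∘ j.succAbove) = (ofFn f).eraseIdx j := by
  refine ext_getElem ?_ fun i h _ => ?_
  · rw [length_ofFn, length_eraseIdx_of_lt (by simp [j.isLt]), length_ofFn]; rfl
  simp only [length_ofFn] at h
  rw [getElem_eraseIdx, List.getElem_ofFn, Function.comp_apply]
  split_ifs with hij
  · rw [List.getElem_ofFn, Fin.succAbove_of_castSucc_lt _ _ hij]; rfl
  · rw [List.getElem_ofFn, Fin.succAbove_of_le_castSucc _ _ (not_lt.1 hij)]; rfl

section Deck

open List

variable {n : ℕ}

lemma ofFn_moveToTop (c : Fin (n + 1)) (π : Equiv.Perm (Fin (n + 1))) :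
    ofFn (moveToTop c π) = c :: (ofFn π).erase c := by
  have hc : (ofFn π)[(π.symm c : ℕ)]'(by simp [(π.symm c).isLt]) = c := by
    rw [List.getElem_ofFn]; simp
  rw [← hc, Nodup.erase_getElem (nodup_ofFn.2 π.injective), ← ofFn_comp_succAbove, ofFn_succ,
    hc]
  simp [moveToTop, Function.comp_def, Fin.cycleRange_symm_succ]

def deck (l : List (Fin n)) : List (Fin n) :=
  l.dedup.reverse ++ (finRange n).filter (· ∉ l)

lemma deck_append_singleton (l : List (Fin n)) (c : Fin n) :
    deck (l ++ [c]) = c :: (deck l).erase c := by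
  have hrest :
      (finRange n).filter (· ∉ l ++ [c]) = ((finRange n).filter (· ∉ l)).erase c := by
    rw [((nodup_finRange n).filter _).erase_eq_filter, List.filter_filter]
    exact filter_congr fun x _ => by by_cases x = c <;> simp [*]
  have htop : (l.dedup.erase c).reverse = l.dedup.reverse.erase c := by
    rw [(nodup_dedup l).erase_eq_filter, (nodup_reverse.2 (nodup_dedup l)).erase_eq_filter,
      filter_reverse]
  rw [deck, deck, dedup_append_singleton, reverse_append, reverse_singleton, singleton_append,
    htop, hrest, erase_append, cons_append]
  split_ifs with hc
  · rw [erase_of_not_mem (l := (finRange n).filter _) (by simp_all)]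
  · rw [erase_of_not_mem hc]

lemma ofFn_rttPerm (r : ℕ) (s : Fin r → Fin n) : ofFn (rttPerm n r s) = deck (ofFn s) := by
  unfold rttPerm
  induction ofFn s using reverseRecOn with
  | nil => simp [deck, ← List.ofFn_id]
  | append_singleton l c ih =>
    cases n with
    | zero => exact c.elim0
    | succ n => rw [foldl_concat, ofFn_moveToTop, ih, deck_append_singleton]

variable {r : ℕ}

lemma distinctCount_eq_length_dedup (s : Fin r → Fin n) :
    distinctCount n r s = (ofFn s).dedup.length := by
  rw [distinctCount, ← card_toFinset]
  congr 1
  ext x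
  simp [mem_ofFn, eq_comm]

lemma distinctCount_comp (σ : Equiv.Perm (Fin n)) (s : Fin r → Fin n) :
    distinctCount n r (σ ∘ s) = distinctCount n r s := by
  rw [distinctCount, ← Finset.image_image, Finset.card_image_of_injective _ σ.injective,
    distinctCount]

lemma rttPerm_apply (s : Fin r → Fin n) (i : Fin n) :
    rttPerm n r s i = (deck (ofFn s))[(i : ℕ)]'(by simp [← ofFn_rttPerm r s]) := by
  rw [← getElem_of_eq (ofFn_rttPerm r s) (by simp), List.getElem_ofFn]

lemma rttPerm_apply_of_lt (s : Fin r → Fin n) {i : Fin n}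
    (hi : (i : ℕ) < distinctCount n r s) :
    rttPerm n r s i =
      (ofFn s).dedup.reverse[(i : ℕ)]'
        (by simpa [← distinctCount_eq_length_dedup] using hi) := by
  rw [rttPerm_apply]
  exact getElem_append_left _

lemma rttPerm_lt_rttPerm_of_le (s : Fin r → Fin n) {i j : Fin n}
    (hi : distinctCount n r s ≤ i) (hij : i < j) : rttPerm n r s i < rttPerm n r s j := by
  have hK : (ofFn s).dedup.reverse.length = distinctCount n r s := by
    rw [length_reverse, distinctCount_eq_length_dedup]
  have hlen : (deck (ofFn s)).length = n := by simp [← ofFn_rttPerm r s]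
  rw [rttPerm_apply, rttPerm_apply]
  unfold deck at hlen ⊢
  rw [getElem_append_right (by omega), getElem_append_right (by omega)]
  refine pairwise_iff_getElem.1 ((pairwise_lt_finRange n).filter _) _ _ _ _ ?_
  simp only [length_append] at hlen
  omega

lemma rttPerm_comp_apply (σ : Equiv.Perm (Fin n)) (s : Fin r → Fin n) {i : Fin n}
    (hi : (i : ℕ) < distinctCount n r s) : rttPerm n r (σ ∘ s) i = σ (rttPerm n r s i) := by
  have hdedup : (ofFn (σ ∘ s)).dedup.reverse = (ofFn s).dedup.reverse.map σ := by
    rw [← map_ofFn, dedup_map_of_injective σ.injective, map_reverse]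
  rw [rttPerm_apply_of_lt _ ((distinctCount_comp σ s).symm ▸ hi), rttPerm_apply_of_lt _ hi,
    getElem_of_eq hdedup, getElem_map]

end Deck

section Lehmer

variable {m n : ℕ}

/-- Counting the values below `f i` that are not used before position `i` makes this depend only
on `f` at positions `≤ i`; for a permutation it is the usual Lehmer code (`lehmer_perm`). -/
def lehmer (f : Fin m → Fin n) (i : Fin m) : ℕ :=
  #{v | v < f i ∧ ∀ j < i, f j ≠ v}

lemma lehmer_lt_sub {f : Fin m → Fin n} (hf : Function.Injective f) (i : Fin m) :
    lehmer f i < n - i := by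
  have hdisj :
      Disjoint ({v | v < f i ∧ ∀ j < i, f j ≠ v} : Finset (Fin n)) ((Iic i).image f) := by
    simp only [disjoint_left, mem_filter, mem_univ, true_and, mem_image, mem_Iic, not_exists,
      not_and]
    rintro v ⟨hv, hfree⟩ j hj rfl
    rcases hj.lt_or_eq with hj | rfl
    · exact hfree j hj rfl
    · exact hv.false
  have := (card_union_of_disjoint hdisj).symm.trans_le (card_le_univ _)
  rw [card_image_of_injective _ hf, Fin.card_Iic, Fintype.card_fin] at this
  exact Nat.lt_sub_of_add_lt (by unfold lehmer; omega)

lemma lehmer_perm (π : Equiv.Perm (Fin n)) (i : Fin n) :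
    lehmer π i = #{j | i < j ∧ π j < π i} := by
  refine (card_equiv π fun j => ?_).symm
  simp only [mem_filter, mem_univ, true_and, π.injective.ne_iff]
  refine ⟨fun ⟨hij, hj⟩ => ⟨hj, fun k hk => (hk.trans hij).ne⟩,
    fun ⟨hj, hfree⟩ => ⟨?_, hj⟩⟩
  refine lt_of_le_of_ne (not_lt.1 fun hji => hfree j hji rfl) ?_
  rintro rfl
  exact hj.false

lemma lehmer_congr {f g : Fin m → Fin n} {i : Fin m} (h : ∀ j ≤ i, f j = g j) :
    lehmer f i = lehmer g i := by
  unfold lehmer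
  congr 1
  refine filter_congr fun v _ => ?_
  rw [h i le_rfl]
  exact and_congr_right fun _ => forall₂_congr fun j hj => by rw [h j hj.le]

lemma lehmer_lt_lehmer {f g : Fin m → Fin n} (hf : Function.Injective f) {i : Fin m}
    (hpre : ∀ j < i, f j = g j) (hlt : f i < g i) : lehmer f i < lehmer g i := by
  refine card_lt_card <| (ssubset_iff_of_subset fun v => ?_).2 ⟨f i, ?_, ?_⟩
  · simp only [mem_filter, mem_univ, true_and]
    exact fun ⟨hv, hfree⟩ => ⟨hv.trans hlt, fun j hj => hpre j hj ▸ hfree j hj⟩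
  · simp only [mem_filter, mem_univ, true_and]
    exact ⟨hlt, fun j hj => hpre j hj ▸ hf.ne hj.ne⟩
  · simp

lemma eq_of_lehmer_eq {f g : Fin m → Fin n} (hf : Function.Injective f)
    (hg : Function.Injective g) (h : lehmer f = lehmer g) : f = g := by
  funext i
  induction i using WellFoundedLT.induction with
  | _ i ih =>
    rcases lt_trichotomy (f i) (g i) with hlt | heq | hgt
    · exact absurd (congrFun h i) (lehmer_lt_lehmer hf ih hlt).ne
    · exact heq
    · exact absurd (congrFun h i) (lehmer_lt_lehmer hg (fun j hj => (ih j hj).symm) hgt).ne'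

def lehmerCode (π : Equiv.Perm (Fin n)) (i : Fin n) : Fin (n - i) :=
  ⟨lehmer π i, lehmer_lt_sub π.injective i⟩

lemma lehmerCode_bijective : Function.Bijective (lehmerCode (n := n)) := by
  refine (Fintype.bijective_iff_injective_and_card _).2 ⟨fun π ρ h => ?_, ?_⟩
  · exact DFunLike.coe_injective (eq_of_lehmer_eq π.injective ρ.injective
      (funext fun i => congrArg Fin.val (congrFun h i)))
  · rw [Fintype.card_perm, Fintype.card_pi, Fintype.card_fin]
    simp only [Fintype.card_fin]
    rw [Fin.prod_univ_eq_prod_range (n - ·), ← Nat.descFactorial_eq_prod_range,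
      Nat.descFactorial_self]

lemma inversionCount_eq_sum_lehmer (π : Equiv.Perm (Fin n)) :
    inversionCount π = ∑ i, lehmer π i := by
  simp only [lehmer_perm, inversionCount, card_filter, Fintype.sum_prod_type]

end Lehmer

theorem Finset.card_filter_fst_eq_card_filter_snd {α β : Type*} [Fintype α] [Fintype β]
    (r : α → β → Prop) [∀ a b, Decidable (r a b)] (A P : α → Prop) (Q : β → Prop)
    [DecidablePred A] [DecidablePred P] [DecidablePred Q] {p q : ℕ} (hp : 0 < p)
    (hA : ∀ a, A a → #{b | r a b} = p) (hB : ∀ b, #{a | A a ∧ r a b} = q)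
    (hPQ : ∀ a b, A a → r a b → (P a ↔ Q b)) :
    #{x : α × β | A x.1 ∧ P x.1} = #{x : α × β | A x.1 ∧ Q x.2} := by
  have hP : #{a | A a ∧ P a} * p = #{b | Q b} * q := by
    refine card_mul_eq_card_mul r (fun a ha => ?_) fun b hb => ?_
    · rw [mem_filter] at ha
      rw [bipartiteAbove, ← hA a ha.2.1, filter_filter]
      exact congrArg card (filter_congr fun b _ =>
        ⟨And.right, fun h => ⟨(hPQ a b ha.2.1 h).1 ha.2.2, h⟩⟩)
    · rw [mem_filter] at hb
      rw [bipartiteBelow, ← hB b, filter_filter]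
      exact congrArg card (filter_congr fun a _ => and_congr_left fun h =>
        ⟨And.left, fun hA => ⟨hA, (hPQ a b hA h).2 hb.2⟩⟩)
  have hU : #{a | A a} * p = #(univ : Finset β) * q :=
    card_mul_eq_card_mul r (fun a ha => by rw [bipartiteAbove, hA a (mem_filter.1 ha).2])
      fun b _ => by rw [bipartiteBelow, filter_filter, hB]
  rw [← univ_product_univ, filter_product_left fun a => A a ∧ P a, filter_product, card_product,
    card_product]
  refine Nat.eq_of_mul_eq_mul_right hp ?_
  calc #{a | A a ∧ P a} * #(univ : Finset β) * p = #(univ : Finset β) * (#{b | Q b} * q) := by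
        rw [← hP]; ring
    _ = #{a | A a} * #{b | Q b} * p := by rw [mul_left_comm, ← hU]; ring

section Counting

variable {n r : ℕ}

lemma inversionCount_rttPerm (s : Fin r → Fin n) :
    inversionCount (rttPerm n r s) =
      ∑ i ∈ univ.filter fun i : Fin n => (i : ℕ) < distinctCount n r s,
        lehmer (rttPerm n r s) i := by
  rw [inversionCount_eq_sum_lehmer, sum_filter_of_ne fun i _ hi => ?_]
  by_contra! hK
  refine hi ((lehmer_perm _ i).trans (card_eq_zero.2 (filter_eq_empty_iff.2 fun j _ hj => ?_)))
  exact (rttPerm_lt_rttPerm_of_le s hK hj.1).not_gt hj.2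

lemma card_perm_eq_on_lt (k : ℕ) (π : Equiv.Perm (Fin n)) :
    #{ρ : Equiv.Perm (Fin n) | ∀ i : Fin n, (i : ℕ) < k → π i = ρ i} =
      #{ρ : Equiv.Perm (Fin n) | ∀ i : Fin n, (i : ℕ) < k → i = ρ i} :=
  card_equiv (Equiv.mulLeft π⁻¹) fun ρ => by
    simp [Equiv.eq_symm_apply]

lemma card_rttPerm_eq_on_lt (k : ℕ) (π : Equiv.Perm (Fin n)) :
    #{s : Fin r → Fin n |
        distinctCount n r s = k ∧ ∀ i : Fin n, (i : ℕ) < k → rttPerm n r s i = π i} =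
      #{s : Fin r → Fin n |
        distinctCount n r s = k ∧ ∀ i : Fin n, (i : ℕ) < k → rttPerm n r s i = i} :=
  card_equiv (Equiv.arrowCongr (Equiv.refl _) π⁻¹) fun s => by
    simp only [mem_filter, mem_univ, true_and]
    change _ ↔ distinctCount n r (⇑π⁻¹ ∘ s) = k ∧
      ∀ i : Fin n, _ → rttPerm n r (⇑π⁻¹ ∘ s) i = i
    rw [distinctCount_comp]
    refine and_congr_right fun hK => forall₂_congr fun i hi => ?_
    rw [rttPerm_comp_apply _ _ (hK ▸ hi), Equiv.Perm.inv_eq_iff_eq]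

lemma card_inversionCount_rttPerm_fiber (k m : ℕ) :
    #{x : (Fin r → Fin n) × Equiv.Perm (Fin n) |
        distinctCount n r x.1 = k ∧ inversionCount (rttPerm n r x.1) = m} =
      #{x : (Fin r → Fin n) × Equiv.Perm (Fin n) |
        distinctCount n r x.1 = k ∧
          ∑ i ∈ univ.filter fun i : Fin n => (i : ℕ) < k, lehmer x.2 i = m} := by
  refine card_filter_fst_eq_card_filter_snd
    (fun (s : Fin r → Fin n) (π : Equiv.Perm (Fin n)) =>
      ∀ i : Fin n, (i : ℕ) < k → rttPerm n r s i = π i)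
    (fun s => distinctCount n r s = k) (fun s => inversionCount (rttPerm n r s) = m)
    (fun π => ∑ i ∈ univ.filter fun i : Fin n => (i : ℕ) < k, lehmer π i = m)
    (card_pos.2 ⟨1, by simp⟩) (fun s _ => card_perm_eq_on_lt k _)
    (card_rttPerm_eq_on_lt k) fun s π hK hπ => ?_
  rw [inversionCount_rttPerm, hK]
  refine Eq.congr_left (sum_congr rfl fun i hi => lehmer_congr fun j hj => hπ j ?_)
  have := (mem_filter.1 hi).2
  omega

lemma card_inversionCount_rttPerm (m : ℕ) :
    #{x : (Fin r → Fin n) × Equiv.Perm (Fin n) | inversionCount (rttPerm n r x.1) = m} =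
      #{x : (Fin r → Fin n) × Equiv.Perm (Fin n) |
        ∑ i ∈ univ.filter fun i : Fin n => (i : ℕ) < distinctCount n r x.1,
          lehmer x.2 i = m} := by
  have hK : ∀ s : Finset ((Fin r → Fin n) × Equiv.Perm (Fin n)),
      Set.MapsTo (fun x : (Fin r → Fin n) × Equiv.Perm (Fin n) => distinctCount n r x.1) s
        (univ.image fun x : (Fin r → Fin n) × Equiv.Perm (Fin n) => distinctCount n r x.1) :=
    fun _ x _ => mem_image_of_mem _ (mem_univ x)
  rw [card_eq_sum_card_fiberwise (hK _), card_eq_sum_card_fiberwise (hK _)]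
  refine sum_congr rfl fun k _ => ?_
  simp only [filter_filter]
  calc _ = #{x : (Fin r → Fin n) × Equiv.Perm (Fin n) |
        distinctCount n r x.1 = k ∧ inversionCount (rttPerm n r x.1) = m} := by
        simp only [and_comm]
    _ = _ := card_inversionCount_rttPerm_fiber k m
    _ = _ := congrArg card <| filter_congr fun x _ => by
      rw [and_comm]
      exact and_congr_left fun h => by rw [h]

end Counting

section UniformProbability

variable {α β : Type*} [Fintype α] [Fintype β]

lemma unifProb_comp_equiv (e : α ≃ β) (p : β → Prop) :
    unifProb (fun x => p (e x)) = unifProb p := by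
  rw [unifProb, unifProb, Nat.card_congr (e.subtypeEquiv fun _ => Iff.rfl), Fintype.card_congr e]

lemma unifProb_prod_fst [Nonempty β] (p : α → Prop) :
    unifProb (fun x : α × β => p x.1) = unifProb p := by
  rw [unifProb, unifProb, Nat.card_congr Equiv.prodSubtypeFstEquivSubtypeProd, Nat.card_prod,
    Nat.card_eq_fintype_card (α := β), Fintype.card_prod, Nat.cast_mul, Nat.cast_mul,
    mul_div_mul_right _ _ (by positivity)]

lemma unifProb_congr_card {p q : α → Prop} [DecidablePred p] [DecidablePred q]
    (h : #{x | p x} = #{x | q x}) : unifProb p = unifProb q := by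
  rw [unifProb, unifProb, Nat.card_eq_fintype_card, Nat.card_eq_fintype_card,
    Fintype.card_subtype, Fintype.card_subtype, h]

end UniformProbability

theorem rtt_inversions_decomposition_general (n r : ℕ) (m : ℕ) :
    unifProb (fun s : Fin r → Fin n => inversionCount (rttPerm n r s) = m) =
      unifProb (fun x : (Fin r → Fin n) × (∀ i : Fin n, Fin (n - (i : ℕ))) =>
        (∑ i ∈ Finset.univ.filter fun i : Fin n => (i : ℕ) < distinctCount n r x.1,
          ((x.2 i : ℕ))) = m) := by
  rw [← unifProb_prod_fst (β := Equiv.Perm (Fin n)),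
    ← unifProb_comp_equiv ((Equiv.refl _).prodCongr (.ofBijective _ lehmerCode_bijective))]
  exact unifProb_congr_card (card_inversionCount_rttPerm m)

/-- **Theorem (decomposition of inversions).** For `n ≥ 1`, `r ≥ 1`, the number of
inversions after `r` iterated random-to-top shuffles is equal in distribution to
`Σ_{i=1}^{K} R_i`, where the `R_i` are independent uniform on `{0, 1, …, n - i}`
(for `1 ≤ i ≤ n`) and `K` is the (independent) number of distinct values among `r`
i.i.d. uniform samples from `[n]` (here everything is uniform on the finite product). -/
theorem rtt_inversions_decomposition (n r : ℕ) (hn : 1 ≤ n) (hr : 1 ≤ r) (m : ℕ) :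
    unifProb (fun s : Fin r → Fin n => inversionCount (rttPerm n r s) = m) =
      unifProb (fun x : (Fin r → Fin n) × (∀ i : Fin n, Fin (n - (i : ℕ))) =>
        (∑ i ∈ Finset.univ.filter fun i : Fin n => (i : ℕ) < distinctCount n r x.1,
          ((x.2 i : ℕ))) = m) :=
  rtt_inversions_decomposition_general n r m
end

section
/- Let a ∈ (0,1] be a constant. For each n, let π_n be a uniformly random permutation of [n] and define L_n^a = n − max_{1 ≤ i ≤ ⌊an⌋} π_n(i) + Σ_{i=1}^{⌊an⌋} 1(π_n(i) = i). Then for every integer ℓ ≥ 0, P(L_n^a = ℓ) → Σ_{j=0}^{ℓ} a(1−a)^j e^{−a} a^{ℓ−j} / (ℓ−j)! as n → ∞; that is, L_n^a converges in distribution to X + Y, where X and Y are independent, X is Poisson with mean a, and Y is geometric with P(Y = k) = a(1−a)^k for integers k ≥ 0. -/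
open MeasureTheory ProbabilityTheory Filter Finset Topology
open scoped NNReal

/-!
Write `x_(m) = x (x-1) ⋯ (x-m+1)` and `k = ⌊an⌋`, and let `G(j, f)` be the probability that the
first `k` positions avoid the `j` largest values and hold exactly `f` fixed points. There are
`|T|_(|S|) (n - |S|)!` permutations mapping a set `S` into a set `T`; applying this to the
permutations fixing a set `A` of early positions and sieving over `A` gives
`G(j, f) = ∑ₘ (-1)^(m+f) C(m,f) / m! · k_(m) (n-k)_(j) / n_(m+j)`.
The `m`-th term tends to `(-1)^(m+f) C(m,f) aᵐ (1-a)ʲ / m!` and is bounded by `2ᵐ / m!`, so by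
Tannery's theorem `G(j, f) → (1-a)ʲ e⁻ᵃ aᶠ / f!`. Finally `n - max_{i ≤ k} π(i) = j` says that
the first `k` positions avoid the top `j` values but not the top `j + 1`, so
`P(Lₙᵃ = ℓ) = ∑_{j ≤ ℓ} (G(j, ℓ-j) - G(j+1, ℓ-j))`, and `(1-a)ʲ - (1-a)ʲ⁺¹ = a (1-a)ʲ`.
-/

open Equiv Function
open scoped Nat

section UniformProbability

variable {α : Type*} [Fintype α]

theorem unifProb_eq_card_div (p : α → Prop) [DecidablePred p] :
    unifProb p = #{x | p x} / Fintype.card α := by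
  rw [unifProb, Nat.card_eq_fintype_card, Fintype.card_subtype]

theorem unifProb_add_eq_sum (D F : α → ℕ) (ℓ : ℕ) :
    unifProb (fun x => D x + F x = ℓ) =
      ∑ j ∈ range (ℓ + 1), unifProb fun x => D x = j ∧ F x = ℓ - j := by
  classical
  simp only [unifProb_eq_card_div, ← sum_div]
  rw [card_eq_sum_card_fiberwise (f := D) (t := range (ℓ + 1)) fun x hx => by
    simp only [coe_filter, mem_univ, true_and, Set.mem_ofPred_eq] at hx
    simp only [coe_range, Set.mem_Iio]
    omega]
  push_cast
  refine congrArg (· / _) (sum_congr rfl fun j hj => ?_)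
  have := mem_range.1 hj
  rw [filter_filter]
  congr 2
  ext x
  simp only [mem_filter, mem_univ, true_and]
  omega

theorem unifProb_eq_and_eq_sub (D : α → ℕ) (p : α → Prop) (j : ℕ) :
    unifProb (fun x => D x = j ∧ p x) =
      unifProb (fun x => j ≤ D x ∧ p x) - unifProb (fun x => j + 1 ≤ D x ∧ p x) := by
  classical
  simp only [unifProb_eq_card_div]
  rw [eq_sub_iff_add_eq, ← add_div, ← Nat.cast_add, ← card_union_of_disjoint
    (disjoint_filter.2 fun x _ h h' => by omega), ← filter_or]
  congr 3
  ext x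
  simp only [mem_filter, mem_univ, true_and]
  constructor
  · rintro (⟨hD, hp⟩ | ⟨hD, hp⟩) <;> exact ⟨by omega, hp⟩
  · rintro ⟨hD, hp⟩
    exact (eq_or_lt_of_le hD).imp (fun h => ⟨h.symm, hp⟩) fun h => ⟨h, hp⟩

end UniformProbability

theorem Int.alternating_sum_range_choose_mul_choose (s f : ℕ) :
    ∑ t ∈ Finset.range (s + 1), (-1 : ℤ) ^ (t + f) * s.choose t * t.choose f =
      if s = f then 1 else 0 := by
  rcases lt_or_ge s f with hsf | hfs
  · rw [if_neg hsf.ne]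
    refine sum_eq_zero fun t ht => ?_
    rw [Nat.choose_eq_zero_of_lt (n := t) (by rw [Finset.mem_range] at ht; omega)]
    simp
  obtain ⟨d, rfl⟩ := Nat.exists_eq_add_of_le hfs
  rw [show f + d + 1 = f + (d + 1) by ring, sum_range_add]
  have hlow : ∑ t ∈ Finset.range f, (-1 : ℤ) ^ (t + f) * (f + d).choose t * t.choose f = 0 :=
    sum_eq_zero fun t ht => by rw [Nat.choose_eq_zero_of_lt (Finset.mem_range.1 ht)]; simp
  have hhigh (u : ℕ) : (-1 : ℤ) ^ (f + u + f) * (f + d).choose (f + u) * (f + u).choose f =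
      (f + d).choose f * ((-1) ^ u * d.choose u) := by
    have hchoose := Nat.choose_mul (n := f + d) (k := f + u) (s := f) (Nat.le_add_right f u)
    simp only [Nat.add_sub_cancel_left] at hchoose
    rw [show f + u + f = u + 2 * f by ring, pow_add, pow_mul, neg_one_sq, one_pow, mul_one,
      mul_assoc, ← Nat.cast_mul, hchoose]
    push_cast
    ring
  rw [hlow, zero_add, sum_congr rfl fun u _ => hhigh u, ← mul_sum,
    Int.alternating_sum_range_choose]
  rcases d with _ | d <;> simp

theorem ite_card_eq_sum_powerset {ι : Type*} [DecidableEq ι] {s F : Finset ι} (hF : F ⊆ s)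
    (f : ℕ) : (if #F = f then 1 else 0 : ℤ) =
      ∑ A ∈ s.powerset, (-1 : ℤ) ^ (#A + f) * (#A).choose f * if A ⊆ F then 1 else 0 := by
  simp only [mul_ite, mul_one, mul_zero]
  rw [← sum_filter, show {A ∈ s.powerset | A ⊆ F} = F.powerset by
      ext A; simpa using fun h : A ⊆ F => h.trans hF,
    sum_powerset_apply_card (fun t => (-1 : ℤ) ^ (t + f) * t.choose f),
    ← Int.alternating_sum_range_choose_mul_choose]
  exact sum_congr rfl fun t _ => by rw [nsmul_eq_mul]; ring

theorem card_filter_card_filter_eq_sum_powerset {α ι : Type*} [DecidableEq ι] (u : Finset α)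
    (s : Finset ι) (P : α → ι → Prop) [∀ x i, Decidable (P x i)] (f : ℕ) :
    (#{x ∈ u | #{i ∈ s | P x i} = f} : ℤ) =
      ∑ A ∈ s.powerset, (-1 : ℤ) ^ (#A + f) * (#A).choose f * #{x ∈ u | ∀ i ∈ A, P x i} := by
  simp only [natCast_card_filter, mul_sum]
  rw [sum_comm]
  refine sum_congr rfl fun x _ => ?_
  rw [ite_card_eq_sum_powerset (filter_subset _ s)]
  refine sum_congr rfl fun A hA => ?_
  congr 2
  simp only [subset_iff, mem_filter]
  exact propext ⟨fun h i hi => (h hi).2, fun h i hi => ⟨mem_powerset.1 hA hi, h i hi⟩⟩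

section PermutationCounting

variable {β : Type*} [Fintype β] [DecidableEq β]

theorem card_perm_fixing (s : Finset β) :
    Fintype.card {σ : Perm β // ∀ i ∈ s, σ i = i} = (Fintype.card β - #s)! := by
  rw [← Fintype.card_congr ((Perm.subtypeEquivSubtypePerm fun x => x ∉ s).trans
      (subtypeEquivRight fun σ => by simp only [not_not])), Fintype.card_perm,
    Fintype.card_subtype_compl, Fintype.card_coe]

theorem card_perm_forall_apply_eq {α : Type*} [Fintype α] {f g : α → β} (hf : Injective f)
    (hg : Injective g) :
    Fintype.card {σ : Perm β // ∀ a, σ (f a) = g a} = (Fintype.card β - Fintype.card α)! := by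
  obtain ⟨σ₀, hσ₀⟩ := Perm.exists_extending_pair f g hf hg
  have shift :
      {σ : Perm β // ∀ a, σ (f a) = g a} ≃ {τ : Perm β // ∀ i ∈ univ.image f, τ i = i} :=
    { toFun := fun σ => ⟨σ₀⁻¹ * σ.1, by simp [σ.2, ← hσ₀]⟩
      invFun := fun τ => ⟨σ₀ * τ.1, fun a => by
        rw [Perm.mul_apply, τ.2 _ (mem_image_of_mem f (mem_univ a)), hσ₀]⟩
      left_inv := fun σ => by simp
      right_inv := fun τ => by simp }
  rw [Fintype.card_congr shift, card_perm_fixing, card_image_of_injective _ hf, card_univ]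

theorem card_perm_mapsTo (S T : Finset β) :
    #{σ : Perm β | ∀ i ∈ S, σ i ∈ T} = (#T).descFactorial #S * (Fintype.card β - #S)! := by
  let restrict (σ : {σ : Perm β // ∀ i ∈ S, σ i ∈ T}) : S ↪ T :=
    ⟨fun i => ⟨σ.1 i, σ.2 i i.2⟩,
      fun i j h => Subtype.ext (σ.1.injective (congrArg Subtype.val h))⟩
  have hfiber (e : S ↪ T) : Fintype.card {σ // restrict σ = e} = (Fintype.card β - #S)! := by
    rw [← Fintype.card_coe S, ← card_perm_forall_apply_eq Subtype.val_injective
      (Subtype.val_injective.comp e.injective)]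
    exact Fintype.card_congr
      { toFun := fun σ => ⟨σ.1.1, fun a => congrArg Subtype.val (DFunLike.congr_fun σ.2 a)⟩
        invFun := fun σ => ⟨⟨σ.1, fun i hi => by rw [σ.2 ⟨i, hi⟩]; exact (e _).2⟩,
          DFunLike.ext _ _ fun a => Subtype.ext (σ.2 a)⟩
        left_inv := fun σ => rfl
        right_inv := fun σ => rfl }
  rw [← Fintype.card_subtype, ← Fintype.card_congr (sigmaFiberEquiv restrict),
    Fintype.card_sigma]
  simp [hfiber, Fintype.card_embedding_eq]

theorem card_perm_fixing_and_mapsTo {A S T : Finset β} (hAS : A ⊆ S) (hAT : A ⊆ T) :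
    #{σ : Perm β | (∀ i ∈ A, σ i = i) ∧ ∀ i ∈ S, σ i ∈ T} =
      (#T - #A).descFactorial (#S - #A) * (Fintype.card β - #S)! := by
  let p : β → Prop := fun x => x ∉ A
  have hcard (U : Finset β) (hAU : A ⊆ U) : #(U.subtype p) = #U - #A := by
    rw [card_subtype, filter_not, filter_mem_eq_inter, inter_eq_right.2 hAU,
      card_sdiff_of_subset hAU]
  have hmapsTo (σ : Perm (Subtype p)) : (∀ i ∈ S.subtype p, σ i ∈ T.subtype p) ↔
      ∀ i ∈ S, (Perm.subtypeEquivSubtypePerm p σ).1 i ∈ T := by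
    refine ⟨fun h i hi => ?_, fun h i hi => ?_⟩
    · by_cases hiA : i ∈ A
      · rw [Perm.subtypeEquivSubtypePerm_apply_of_not_mem (p := p) _ (not_not.2 hiA)]
        exact hAT hiA
      · rw [Perm.subtypeEquivSubtypePerm_apply_of_mem (p := p) _ hiA]
        exact mem_subtype.1 (h ⟨i, hiA⟩ (mem_subtype.2 hi))
    · simpa [Perm.subtypeEquivSubtypePerm_apply_of_mem (p := p) _ i.2] using
        h i (mem_subtype.1 hi)
  have extend : {σ : Perm (Subtype p) // ∀ i ∈ S.subtype p, σ i ∈ T.subtype p} ≃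
      {σ : Perm β // (∀ i ∈ A, σ i = i) ∧ ∀ i ∈ S, σ i ∈ T} :=
    ((Perm.subtypeEquivSubtypePerm p).subtypeEquiv hmapsTo).trans
      ((subtypeSubtypeEquivSubtypeInter (fun σ : Perm β => ∀ a, ¬p a → σ a = a)
        fun σ => ∀ i ∈ S, σ i ∈ T).trans (subtypeEquivRight fun σ => by simp [p]))
  rw [← Fintype.card_subtype, ← Fintype.card_congr extend, Fintype.card_subtype,
    card_perm_mapsTo, hcard S hAS, hcard T hAT, Fintype.card_subtype_compl, Fintype.card_coe]
  have := card_le_card hAS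
  have := card_le_univ S
  congr 2
  omega

end PermutationCounting

theorem Nat.choose_mul_descFactorial_mul_factorial {n k j : ℕ} (hkj : k + j ≤ n) (m : ℕ) :
    k.choose m * (n - j - m).descFactorial (k - m) * (n - k)! * (m ! * n.descFactorial (m + j)) =
      k.descFactorial m * (n - k).descFactorial j * n ! := by
  rcases lt_or_ge k m with hkm | hmk
  · simp [Nat.choose_eq_zero_of_lt hkm, Nat.descFactorial_eq_zero_iff_lt.2 hkm]
  have hfirst : (n - j - m).descFactorial (k - m) * n.descFactorial (m + j) =
      n.descFactorial (k + j) := by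
    rw [← Nat.descFactorial_mul_descFactorial (show m + j ≤ k + j by omega),
      show n - (m + j) = n - j - m by omega, show k + j - (m + j) = k - m by omega]
  have hsecond : (n - k).descFactorial j * n.descFactorial k = n.descFactorial (k + j) := by
    rw [← Nat.descFactorial_mul_descFactorial (Nat.le_add_right k j), Nat.add_sub_cancel_left]
  calc k.choose m * (n - j - m).descFactorial (k - m) * (n - k)! * (m ! * n.descFactorial (m + j))
      = (m ! * k.choose m) * ((n - j - m).descFactorial (k - m) * n.descFactorial (m + j)) *
          (n - k)! := by ring
    _ = k.descFactorial m * ((n - k).descFactorial j * n.descFactorial k) * (n - k)! := by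
      rw [← Nat.descFactorial_eq_factorial_mul_choose, hfirst, hsecond]
    _ = k.descFactorial m * (n - k).descFactorial j * ((n - k)! * n.descFactorial k) := by ring
    _ = _ := by rw [Nat.factorial_mul_descFactorial (by omega)]

theorem Nat.descFactorial_mul_descFactorial_sub_le {n k : ℕ} (hkn : k ≤ n) (m j : ℕ) :
    k.descFactorial m * (n - k).descFactorial j ≤ n.descFactorial (m + j) := by
  rcases lt_or_ge k m with hkm | hmk
  · simp [Nat.descFactorial_eq_zero_iff_lt.2 hkm]
  calc k.descFactorial m * (n - k).descFactorial j
      ≤ n.descFactorial m * (n - m).descFactorial j :=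
        Nat.mul_le_mul (Nat.descFactorial_le m hkn) (Nat.descFactorial_le j (by omega))
    _ = n.descFactorial (m + j) := by
      rw [mul_comm, ← Nat.descFactorial_mul_descFactorial (Nat.le_add_right m j),
        Nat.add_sub_cancel_left]

section FirstPositions

variable {n k : ℕ}

theorem card_filter_val_lt_of_le (hk : k ≤ n) : #{i : Fin n | (i : ℕ) < k} = k := by
  rw [Fin.card_filter_val_lt, min_eq_right hk]

theorem card_filter_val_add_lt (j : ℕ) : #{v : Fin n | (v : ℕ) + j < n} = n - j := by
  rw [filter_congr fun (v : Fin n) _ => show (v : ℕ) + j < n ↔ (v : ℕ) < n - j by omega,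
    Fin.card_filter_val_lt]
  omega

theorem le_sub_maxFirst_iff (π : Perm (Fin n)) {j : ℕ} (hj : j ≤ n) :
    j ≤ n - maxFirst n k π ↔ ∀ i : Fin n, (i : ℕ) < k → (π i : ℕ) + j < n := by
  have hle : j ≤ n - maxFirst n k π ↔ maxFirst n k π ≤ n - j := by
    have : maxFirst n k π ≤ n := Finset.sup_le fun i _ => (π i).isLt
    omega
  rw [hle, maxFirst, Finset.sup_le_iff]
  simp only [mem_filter, mem_univ, true_and]
  exact forall_congr' fun i => imp_congr_right fun _ => by omega

theorem le_maxFirst (hk : k ≤ n) (π : Perm (Fin n)) : k ≤ maxFirst n k π := by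
  have hsub : ({i : Fin n | (i : ℕ) < k} : Finset _).image (fun i => (π i : ℕ)) ⊆
      range (maxFirst n k π) := fun v hv => by
    obtain ⟨i, hi, rfl⟩ := mem_image.1 hv
    exact mem_range.2 (Finset.le_sup (f := fun i => (π i : ℕ) + 1) hi)
  calc k = #(({i : Fin n | (i : ℕ) < k} : Finset _).image fun i => (π i : ℕ)) := by
        rw [card_image_of_injective _ fun i i' h => π.injective (Fin.val_injective h),
          card_filter_val_lt_of_le hk]
    _ ≤ maxFirst n k π := (card_le_card hsub).trans_eq (card_range _)

theorem fixedFirst_eq_card_filter (π : Perm (Fin n)) :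
    fixedFirst n k π = #{i ∈ {i : Fin n | (i : ℕ) < k} | π i = i} := by
  rw [fixedFirst, filter_filter]

theorem card_perm_forall_lt_add_and_fixing {j : ℕ} (hkj : k + j ≤ n) {A : Finset (Fin n)}
    (hA : A ⊆ univ.filter fun i : Fin n => (i : ℕ) < k) :
    #{π : Perm (Fin n) | (∀ i : Fin n, (i : ℕ) < k → (π i : ℕ) + j < n) ∧ ∀ i ∈ A, π i = i} =
      (n - j - #A).descFactorial (k - #A) * (n - k)! := by
  have hST : univ.filter (fun i : Fin n => (i : ℕ) < k) ⊆
      univ.filter fun v : Fin n => (v : ℕ) + j < n := by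
    intro i
    simp only [mem_filter, mem_univ, true_and]
    omega
  have h := card_perm_fixing_and_mapsTo hA (hA.trans hST)
  rw [card_filter_val_lt_of_le (by omega), card_filter_val_add_lt, Fintype.card_fin] at h
  rw [← h]
  congr 1
  ext π
  simp only [mem_filter, mem_univ, true_and]
  exact and_comm

theorem card_le_sub_maxFirst_and_fixedFirst {j : ℕ} (hkj : k + j ≤ n) (f : ℕ) :
    (#{π : Perm (Fin n) | j ≤ n - maxFirst n k π ∧ fixedFirst n k π = f} : ℤ) =
      ∑ m ∈ range (k + 1), (-1 : ℤ) ^ (m + f) * m.choose f *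
        (k.choose m * (n - j - m).descFactorial (k - m) * (n - k)!) := by
  have hS := card_filter_val_lt_of_le (n := n) (k := k) (by omega)
  rw [← filter_filter, filter_congr fun π _ => le_sub_maxFirst_iff π (by omega : j ≤ n),
    filter_congr fun π _ => by rw [fixedFirst_eq_card_filter],
    card_filter_card_filter_eq_sum_powerset]
  calc _ = ∑ A ∈ (univ.filter fun i : Fin n => (i : ℕ) < k).powerset,
        (-1 : ℤ) ^ (#A + f) * (#A).choose f *
          ((n - j - #A).descFactorial (k - #A) * (n - k)! : ℕ) := by
        refine sum_congr rfl fun A hA => ?_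
        rw [← card_perm_forall_lt_add_and_fixing hkj (mem_powerset.1 hA), filter_filter]
        congr
    _ = _ := by
        rw [sum_powerset_apply_card (fun m => (-1 : ℤ) ^ (m + f) * m.choose f *
          ((n - j - m).descFactorial (k - m) * (n - k)! : ℕ)), hS]
        refine sum_congr rfl fun m _ => ?_
        push_cast
        ring

theorem unifProb_le_sub_maxFirst_and_fixedFirst_eq_tsum (hk : k ≤ n) (j f : ℕ) :
    unifProb (fun π : Perm (Fin n) => j ≤ n - maxFirst n k π ∧ fixedFirst n k π = f) =
      ∑' m, (-1 : ℝ) ^ (m + f) * m.choose f / m ! *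
        ((k.descFactorial m * (n - k).descFactorial j : ℕ) / n.descFactorial (m + j)) := by
  rw [unifProb_eq_card_div, Fintype.card_perm, Fintype.card_fin]
  rcases le_or_gt (k + j) n with hkj | hkj
  · rw [← Int.cast_natCast, card_le_sub_maxFirst_and_fixedFirst hkj,
      tsum_eq_sum (s := range (k + 1))]
    · push_cast
      rw [sum_div]
      refine sum_congr rfl fun m hm => ?_
      have hmk : m ≤ k := Nat.lt_succ_iff.1 (mem_range.1 hm)
      have hdesc : (n.descFactorial (m + j) : ℝ) ≠ 0 := by
        exact_mod_cast (Nat.descFactorial_pos.2 (by omega)).ne'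
      have hid := congrArg (Nat.cast : ℕ → ℝ) (Nat.choose_mul_descFactorial_mul_factorial hkj m)
      push_cast at hid
      field_simp
      linear_combination (m.choose f : ℝ) * hid
    · intro m hm
      rw [Nat.descFactorial_eq_zero_iff_lt.2 (by simpa using hm)]
      simp
  · have hnone (π : Perm (Fin n)) : ¬j ≤ n - maxFirst n k π := by
      have := le_maxFirst hk π
      omega
    have hdesc : (n - k).descFactorial j = 0 := Nat.descFactorial_eq_zero_iff_lt.2 (by omega)
    simp [hnone, hdesc]

end FirstPositions

theorem tendsto_natCast_sub_div {u : ℕ → ℕ} {b : ℝ}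
    (h : Tendsto (fun n => (u n : ℝ) / n) atTop (𝓝 b)) (c : ℕ) :
    Tendsto (fun n => ((u n - c : ℕ) : ℝ) / n) atTop (𝓝 b) := by
  have hlower : Tendsto (fun n : ℕ => ((u n : ℝ) - c) / n) atTop (𝓝 b) := by
    simpa [sub_div] using h.sub (tendsto_const_div_atTop_nhds_zero_nat (c : ℝ))
  refine tendsto_of_tendsto_of_tendsto_of_le_of_le hlower h (fun n => ?_) (fun n => ?_)
  · gcongr
    rcases le_total c (u n) with hc | hc
    · rw [Nat.cast_sub hc]
    · rw [Nat.sub_eq_zero_of_le hc, Nat.cast_zero, sub_nonpos]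
      exact Nat.cast_le.2 hc
  · gcongr
    exact Nat.sub_le _ _

theorem tendsto_descFactorial_div_pow {u : ℕ → ℕ} {b : ℝ}
    (h : Tendsto (fun n => (u n : ℝ) / n) atTop (𝓝 b)) (m : ℕ) :
    Tendsto (fun n => ((u n).descFactorial m : ℝ) / (n : ℝ) ^ m) atTop (𝓝 (b ^ m)) := by
  induction m with
  | zero => simp
  | succ m ih =>
    rw [pow_succ']
    refine ((tendsto_natCast_sub_div h m).mul ih).congr fun n => ?_
    rw [Nat.descFactorial_succ, Nat.cast_mul, pow_succ']
    ring

theorem tendsto_descFactorial_mul_descFactorial_sub_div {u : ℕ → ℕ} {a : ℝ}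
    (hu : ∀ n, u n ≤ n) (h : Tendsto (fun n => (u n : ℝ) / n) atTop (𝓝 a)) (m j : ℕ) :
    Tendsto (fun n => (((u n).descFactorial m * (n - u n).descFactorial j : ℕ) : ℝ) /
      n.descFactorial (m + j)) atTop (𝓝 (a ^ m * (1 - a) ^ j)) := by
  have hself : Tendsto (fun n : ℕ => (n : ℝ) / n) atTop (𝓝 1) :=
    tendsto_const_nhds.congr' <| (eventually_ne_atTop 0).mono fun n hn =>
      (div_self (Nat.cast_ne_zero.2 hn)).symm
  have hcompl : Tendsto (fun n => ((n - u n : ℕ) : ℝ) / n) atTop (𝓝 (1 - a)) :=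
    (hself.sub h).congr fun n => by rw [Nat.cast_sub (hu n), sub_div]
  have hlim := ((tendsto_descFactorial_div_pow h m).mul
    (tendsto_descFactorial_div_pow hcompl j)).div
    (tendsto_descFactorial_div_pow (u := id) hself (m + j)) (by simp)
  rw [one_pow, div_one] at hlim
  refine hlim.congr' ?_
  filter_upwards [eventually_ge_atTop (m + j), eventually_gt_atTop 0] with n hn hpos
  have hdesc : (n.descFactorial (m + j) : ℝ) ≠ 0 := by
    exact_mod_cast (Nat.descFactorial_pos.2 hn).ne'
  have hn0 : (n : ℝ) ≠ 0 := by positivity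
  simp only [Pi.div_apply, id, Nat.cast_mul]
  field_simp
  ring

theorem hasSum_neg_one_pow_mul_choose_div_factorial_mul_pow (x : ℝ) (f : ℕ) :
    HasSum (fun m => (-1 : ℝ) ^ (m + f) * m.choose f / m ! * x ^ m)
      (Real.exp (-x) * x ^ f / f !) := by
  have hexp : HasSum (fun s => (-x) ^ s / s !) (Real.exp (-x)) := by
    rw [Real.exp_eq_exp_ℝ]
    exact NormedSpace.expSeries_div_hasSum_exp (-x)
  refine (hasSum_nat_add_iff' f).1 ?_
  have hlow : ∑ m ∈ range f, (-1 : ℝ) ^ (m + f) * m.choose f / m ! * x ^ m = 0 :=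
    sum_eq_zero fun m hm => by simp [Nat.choose_eq_zero_of_lt (mem_range.1 hm)]
  have hterm (s : ℕ) : (-1 : ℝ) ^ (s + f + f) * (s + f).choose f / (s + f)! * x ^ (s + f) =
      x ^ f / f ! * ((-x) ^ s / s !) := by
    have hchoose := Nat.add_choose_mul_factorial_mul_factorial s f
    have hchoose0 : ((s + f).choose f : ℝ) ≠ 0 := by
      exact_mod_cast (Nat.choose_pos (Nat.le_add_left f s)).ne'
    have hsign : (-1 : ℝ) ^ (s + f + f) = (-1) ^ s := by
      rw [add_assoc, pow_add, ← two_mul, pow_mul, neg_one_sq, one_pow, mul_one]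
    rw [hsign, ← hchoose]
    push_cast
    field_simp
    rw [neg_pow x]
    ring
  rw [hlow, sub_zero, funext hterm,
    show Real.exp (-x) * x ^ f / f ! = x ^ f / f ! * Real.exp (-x) by ring]
  exact hexp.mul_left _

theorem tendsto_unifProb_le_sub_maxFirst_and_fixedFirst {a : ℝ} (ha : 0 ≤ a) (ha' : a ≤ 1)
    (j f : ℕ) :
    Tendsto (fun n : ℕ => unifProb fun π : Perm (Fin n) =>
        j ≤ n - maxFirst n ⌊a * n⌋₊ π ∧ fixedFirst n ⌊a * n⌋₊ π = f) atTop
      (𝓝 ((1 - a) ^ j * (Real.exp (-a) * a ^ f / f !))) := by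
  have hk (n : ℕ) : ⌊a * n⌋₊ ≤ n :=
    Nat.floor_le_of_le (mul_le_of_le_one_left (Nat.cast_nonneg n) ha')
  have hfloor : Tendsto (fun n : ℕ => (⌊a * n⌋₊ : ℝ) / n) atTop (𝓝 a) :=
    (tendsto_nat_floor_mul_div_atTop ha).comp tendsto_natCast_atTop_atTop
  simp only [unifProb_le_sub_maxFirst_and_fixedFirst_eq_tsum (hk _)]
  rw [← ((hasSum_neg_one_pow_mul_choose_div_factorial_mul_pow a f).mul_left
    ((1 - a) ^ j)).tsum_eq]
  refine tendsto_tsum_of_dominated_convergence (bound := fun m => (2 : ℝ) ^ m / (m ! : ℝ))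
    (Real.summable_pow_div_factorial 2) (fun m => ?_) (Eventually.of_forall fun n m => ?_)
  · convert (tendsto_descFactorial_mul_descFactorial_sub_div hk hfloor m j).const_mul
      ((-1 : ℝ) ^ (m + f) * m.choose f / m !) using 2
    ring
  · have hratio : ((⌊a * n⌋₊.descFactorial m * (n - ⌊a * n⌋₊).descFactorial j : ℕ) : ℝ) /
        n.descFactorial (m + j) ≤ 1 :=
      div_le_one_of_le₀ (by exact_mod_cast Nat.descFactorial_mul_descFactorial_sub_le (hk n) m j)
        (by positivity)
    rw [norm_mul, norm_div, norm_mul, norm_pow, norm_neg, norm_one, one_pow, one_mul,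
      Real.norm_of_nonneg (by positivity), Real.norm_of_nonneg (by positivity),
      Real.norm_of_nonneg (by positivity)]
    calc (m.choose f : ℝ) / m ! * _ ≤ (m.choose f : ℝ) / m ! * 1 := by gcongr
      _ ≤ (2 : ℝ) ^ m / m ! := by
        rw [mul_one]
        gcongr
        exact_mod_cast Nat.choose_le_two_pow m f

/-- **Proposition (deterministically indexed model).** For a constant `a ∈ (0, 1]` and a
uniformly random permutation `π` of `[n]`, the statistic
`Lₙᵃ = n - max_{1 ≤ i ≤ ⌊an⌋} π(i) + Σ_{i=1}^{⌊an⌋} 1(π(i) = i)` satisfies, for every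
`ℓ ≥ 0`, `P(Lₙᵃ = ℓ) → Σ_{j=0}^{ℓ} a(1-a)^j e⁻ᵃ a^{ℓ-j}/(ℓ-j)!`; i.e. `Lₙᵃ` converges in
distribution to an independent sum of a `Poisson(a)` and a geometric with parameter `a`. -/
theorem uniform_perm_poisson_geometric (a : ℝ) (ha : 0 < a) (ha' : a ≤ 1) (ℓ : ℕ) :
    Tendsto
      (fun n : ℕ =>
        unifProb (fun π : Equiv.Perm (Fin n) =>
          n - maxFirst n ⌊a * (n : ℝ)⌋₊ π + fixedFirst n ⌊a * (n : ℝ)⌋₊ π = ℓ))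
      atTop
      (𝓝 (∑ j ∈ Finset.range (ℓ + 1),
        a * (1 - a) ^ j * (Real.exp (-a) * a ^ (ℓ - j) / (Nat.factorial (ℓ - j) : ℝ)))) := by
  have hG := tendsto_unifProb_le_sub_maxFirst_and_fixedFirst ha.le ha'
  have hlim := tendsto_finsetSum (range (ℓ + 1)) fun j _ =>
    (hG j (ℓ - j)).sub (hG (j + 1) (ℓ - j))
  convert hlim using 2 with n
  · simp only [unifProb_add_eq_sum, unifProb_eq_and_eq_sub]
  · exact sum_congr rfl fun j _ => by ring
end

section
/- Let n ≥ 2 and r ≥ 0 be integers, and let I^r_n be the number of inversions of the random permutation of [n] obtained by performing r iterated random-to-top shuffles starting from the identity. Then E[I^r_n] = (1/2) · C(n,2) · (1 − ((n−2)/n)^r), where C(n,2) = n(n−1)/2. -/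
open MeasureTheory ProbabilityTheory Filter Finset Topology
open scoped NNReal

/-! Fix two cards `a < b` and count the selection sequences after which `b` lies above `a`.
Moving card `c` to the top puts `b` above `a` if `c = b`, puts it below if `c = a`, and keeps
their relative order otherwise. Hence this number `N_r` satisfies `N_0 = 0` and
`N_{r+1} = (n - 2) N_r + n ^ r`, so `2 N_r = n ^ r - (n - 2) ^ r`; summing over the `C(n, 2)`
pairs and dividing by `n ^ r` gives the expectation. -/

namespace Fin

theorem coe_cycleRange {n : ℕ} (i j : Fin n) :
    (i.cycleRange j : ℕ) = if j < i then (j : ℕ) + 1 else if j = i then 0 else j := by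
  rcases lt_trichotomy j i with h | rfl | h
  · simp [h, coe_cycleRange_of_lt h]
  · simp [coe_cycleRange_of_le le_rfl]
  · simp [h.not_gt, h.ne', cycleRange_of_gt h]

theorem cycleRange_lt_cycleRange_iff {n : ℕ} {i j k : Fin n} (hjk : j ≠ k) :
    i.cycleRange j < i.cycleRange k ↔ j = i ∨ (k ≠ i ∧ j < k) := by
  simp only [lt_def, coe_cycleRange, Fin.ext_iff, ne_eq] at hjk ⊢
  split_ifs <;> omega

end Fin

theorem card_filter_eq_sum_card_filter_snoc {α : Type*} [Fintype α] {r : ℕ}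
    (p : (Fin (r + 1) → α) → Prop) [DecidablePred p] :
    #{s | p s} = ∑ s : Fin r → α, #{c | p (Fin.snoc s c)} := by
  rw [card_filter, ← (Fin.snocEquiv fun _ => α).sum_comp, Fintype.sum_prod_type, sum_comm]
  simp only [card_filter]
  rfl

section Shuffle

variable {n : ℕ}

theorem moveToTop_inv_apply (c : Fin n) (π : Equiv.Perm (Fin n)) (x : Fin n) :
    (moveToTop c π)⁻¹ x = (π⁻¹ c).cycleRange (π⁻¹ x) := by
  simp [moveToTop, mul_inv_rev, Equiv.Perm.mul_apply]

theorem moveToTop_inv_lt_iff (π : Equiv.Perm (Fin n)) {a b : Fin n} (hab : a ≠ b) (c : Fin n) :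
    (moveToTop c π)⁻¹ b < (moveToTop c π)⁻¹ a ↔ c = b ∨ (c ≠ a ∧ c ≠ b ∧ π⁻¹ b < π⁻¹ a) := by
  rw [moveToTop_inv_apply, moveToTop_inv_apply,
    Fin.cycleRange_lt_cycleRange_iff (π⁻¹.injective.ne hab.symm)]
  simp only [π⁻¹.injective.eq_iff, ne_eq]
  grind

theorem card_filter_moveToTop_inv_lt (π : Equiv.Perm (Fin n)) {a b : Fin n} (hab : a ≠ b) :
    #{c | (moveToTop c π)⁻¹ b < (moveToTop c π)⁻¹ a} = if π⁻¹ b < π⁻¹ a then n - 1 else 1 := by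
  simp_rw [moveToTop_inv_lt_iff π hab]
  split_ifs with h
  · have : ({c | c = b ∨ (c ≠ a ∧ c ≠ b ∧ π⁻¹ b < π⁻¹ a)} : Finset (Fin n)) = univ.erase a := by
      ext c
      grind
    rw [this, card_erase_of_mem (mem_univ a), card_univ, Fintype.card_fin]
  · have : ({c | c = b ∨ (c ≠ a ∧ c ≠ b ∧ π⁻¹ b < π⁻¹ a)} : Finset (Fin n)) = {b} := by
      ext c
      simp only [mem_filter, mem_univ, true_and, mem_singleton, h, and_false, or_false]
    rw [this, card_singleton]

theorem rttPerm_snoc (r : ℕ) (s : Fin r → Fin n) (c : Fin n) :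
    rttPerm n (r + 1) (Fin.snoc s c) = moveToTop c (rttPerm n r s) := by
  rw [rttPerm, rttPerm, List.ofFn_succ']
  simp

end Shuffle

section Counting

variable {n : ℕ} {a b : Fin n}

theorem card_rttPerm_inv_lt_succ (hab : a ≠ b) (r : ℕ) :
    #{s : Fin (r + 1) → Fin n | (rttPerm n (r + 1) s)⁻¹ b < (rttPerm n (r + 1) s)⁻¹ a} =
      (n - 2) * #{s : Fin r → Fin n | (rttPerm n r s)⁻¹ b < (rttPerm n r s)⁻¹ a} + n ^ r := by
  have hn : 2 ≤ n := by omega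
  have hsplit (q : Prop) [Decidable q] :
      (if q then n - 1 else 1) = (n - 2) * (if q then 1 else 0) + 1 := by
    split_ifs <;> omega
  simp_rw [card_filter_eq_sum_card_filter_snoc, rttPerm_snoc, card_filter_moveToTop_inv_lt _ hab,
    hsplit, sum_add_distrib, ← mul_sum, ← card_filter]
  simp

theorem two_mul_card_rttPerm_inv_lt (hab : a < b) (r : ℕ) :
    2 * (#{s : Fin r → Fin n | (rttPerm n r s)⁻¹ b < (rttPerm n r s)⁻¹ a} : ℝ) =
      (n : ℝ) ^ r - ((n : ℝ) - 2) ^ r := by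
  induction r with
  | zero => simp [rttPerm, hab.not_gt]
  | succ r ih =>
    have hn : 2 ≤ n := by omega
    rw [card_rttPerm_inv_lt_succ hab.ne]
    push_cast [hn]
    linear_combination ((n : ℝ) - 2) * ih

end Counting

theorem inversionCount_inv {n : ℕ} (π : Equiv.Perm (Fin n)) :
    inversionCount π⁻¹ = inversionCount π := by
  refine card_nbij' (fun p => (π⁻¹ p.2, π⁻¹ p.1)) (fun p => (π p.2, π p.1)) ?_ ?_ ?_ ?_ <;>
    intro p <;> simp +contextual

theorem card_filter_fst_lt_snd (n : ℕ) : #{p : Fin n × Fin n | p.1 < p.2} = n.choose 2 := by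
  rw [Nat.choose_two_right, card_filter, Fintype.sum_prod_type_right]
  simp_rw [← card_filter]
  simp only [filter_gt_eq_Iio, Fin.card_Iio]
  rw [Fin.sum_univ_eq_sum_range (fun i => i) n, sum_range_id]

theorem sum_inversionCount_rttPerm (n r : ℕ) :
    ∑ s : Fin r → Fin n, (inversionCount (rttPerm n r s) : ℝ) =
      n.choose 2 * (((n : ℝ) ^ r - ((n : ℝ) - 2) ^ r) / 2) := by
  rw [sum_congr rfl fun s _ => by rw [← inversionCount_inv]]
  simp_rw [inversionCount, card_filter, Nat.cast_sum]
  rw [sum_comm, ← card_filter_fst_lt_snd, ← nsmul_eq_mul, ← sum_const, sum_filter]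
  refine sum_congr rfl fun p _ => ?_
  split_ifs with hp
  · simp only [hp, true_and, Nat.cast_ite, Nat.cast_one, Nat.cast_zero]
    rw [sum_boole, eq_div_iff two_ne_zero, mul_comm, two_mul_card_rttPerm_inv_lt hp]
  · simp [hp]

theorem rtt_expected_inversions_general (n r : ℕ) :
    unifExpect (fun s : Fin r → Fin n => (inversionCount (rttPerm n r s) : ℝ)) =
      (Nat.choose n 2 : ℝ) / 2 * (1 - (((n : ℝ) - 2) / n) ^ r) := by
  rw [unifExpect, sum_inversionCount_rttPerm, Fintype.card_fun, Fintype.card_fin, Fintype.card_fin]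
  push_cast
  rcases eq_or_ne n 0 with rfl | hn
  · simp
  · rw [div_pow]
    field_simp

/-- **Proposition (expected number of inversions).** For `n ≥ 2` and `r ≥ 0`, the expected
number of inversions after `r` iterated random-to-top shuffles is
`(1/2)·C(n,2)·(1 - ((n-2)/n)^r)`. -/
theorem rtt_expected_inversions (n r : ℕ) (hn : 2 ≤ n) :
    unifExpect (fun s : Fin r → Fin n => (inversionCount (rttPerm n r s) : ℝ)) =
      (Nat.choose n 2 : ℝ) / 2 * (1 - (((n : ℝ) - 2) / n) ^ r) :=
  rtt_expected_inversions_general n r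
end
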